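/- (Bias of the Bartlett estimator.) Let M ≥ 1 be an integer, let ε > 0, and let M̂ ∈ ℕ satisfy Σ_{|k| ≥ M̂} ‖R[k]‖₂ ≤ ε/2. If M ≥ 2 M̂ ‖R‖₁ / ε, then sup_{s∈[−1/2,1/2]} ‖Φ(s) − Σ_{k=−M+1}^{M−1} e^{−j2πsk} (1 − |k|/M) R[k]‖₂ ≤ ε. -/

import Mathlib

/-- The spectral norm (largest singular value): the operator norm of a matrix
acting between Euclidean spaces. -/
noncomputable def spec2 {𝕜 m n : Type*} [RCLike 𝕜] [Fintype m] [Fintype n] [DecidableEq n]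
    (M : Matrix m n 𝕜) : ℝ :=
  letI := Matrix.instL2OpNormedAddCommGroup (𝕜 := 𝕜) (m := m) (n := n)
  ‖M‖

/-- The spectral density `Φ(s) = Σ_{k∈ℤ} e^{−j2πsk} R[k]`. -/
noncomputable def Phi {n : ℕ} (R : ℤ → Matrix (Fin n) (Fin n) ℝ) (s : ℝ) :
    Matrix (Fin n) (Fin n) ℂ :=
  ∑' k : ℤ,
    Complex.exp (-(2 * (Real.pi : ℂ) * (s : ℂ) * (k : ℂ)) * Complex.I) • (R k).map (↑· : ℝ → ℂ)

/-!
Write `f k = e^{-j2πsk} R[k]` and `w_M(k) = (1 - |k|/M)₊` for the triangular (Bartlett) window, so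
that the bias is `Φ(s) - Σ_k w_M(k) f k = Σ_k (1 - w_M(k)) f k`, with `‖f k‖₂ ≤ ‖R[k]‖₂` because
complexifying a real matrix does not increase its spectral norm. The weights satisfy
`0 ≤ 1 - w_M(k) ≤ M̂/M + 1_{|k| ≥ M̂}`, so the bias is at most
`(M̂/M) ‖R‖₁ + Σ_{|k| ≥ M̂} ‖R[k]‖₂ ≤ ε/2 + ε/2`.
-/

open scoped Matrix.Norms.L2Operator
open Finset Matrix

lemma spec2_eq_norm {𝕜 m n : Type*} [RCLike 𝕜] [Fintype m] [Fintype n] [DecidableEq n]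
    (A : Matrix m n 𝕜) : spec2 A = ‖A‖ := rfl

lemma EuclideanSpace.norm_sq_eq_norm_sq_re_add_norm_sq_im {ι : Type*} [Fintype ι]
    (x : EuclideanSpace ℂ ι) :
    ‖x‖ ^ 2 = ‖WithLp.toLp 2 fun i => (x i).re‖ ^ 2 + ‖WithLp.toLp 2 fun i => (x i).im‖ ^ 2 := by
  simp only [EuclideanSpace.norm_sq_eq, Complex.sq_norm, Complex.normSq_apply,
    Real.norm_eq_abs, sq_abs, ← sum_add_distrib]
  exact sum_congr rfl fun i _ => by ring

lemma Matrix.l2_opNorm_map_ofReal_le {m n : Type*} [Fintype m] [Fintype n] [DecidableEq n]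
    (A : Matrix m n ℝ) : ‖A.map (↑· : ℝ → ℂ)‖ ≤ ‖A‖ := by
  rw [l2_opNorm_def]
  refine ContinuousLinearMap.opNorm_le_bound _ (norm_nonneg A) fun x => ?_
  set u : EuclideanSpace ℝ n := WithLp.toLp 2 fun i => (x i).re
  set v : EuclideanSpace ℝ n := WithLp.toLp 2 fun i => (x i).im
  set y := (toEuclideanLin ≪≫ₗ LinearMap.toContinuousLinearMap) (A.map (↑· : ℝ → ℂ)) x
  have hre : (WithLp.toLp 2 fun i => (y i).re) = (EuclideanSpace.equiv m ℝ).symm (A *ᵥ u) := by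
    ext i; simp [y, u, mulVec, dotProduct]
  have him : (WithLp.toLp 2 fun i => (y i).im) = (EuclideanSpace.equiv m ℝ).symm (A *ᵥ v) := by
    ext i; simp [y, v, mulVec, dotProduct]
  rw [← pow_le_pow_iff_left₀ (norm_nonneg _) (by positivity) two_ne_zero,
    EuclideanSpace.norm_sq_eq_norm_sq_re_add_norm_sq_im, hre, him, mul_pow,
    EuclideanSpace.norm_sq_eq_norm_sq_re_add_norm_sq_im x, mul_add, ← mul_pow, ← mul_pow]
  gcongr <;> exact l2_opNorm_mulVec A _

lemma tsum_sub_sum_smul_eq_tsum_one_sub_smul {ι R E : Type*} [Ring R] [AddCommGroup E]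
    [Module R E] [TopologicalSpace E] [IsTopologicalAddGroup E] [T2Space E]
    {f : ι → E} (hf : Summable f) (s : Finset ι) {w : ι → R} (hw : ∀ i ∉ s, w i = 0) :
    ∑' i, f i - ∑ i ∈ s, w i • f i = ∑' i, (1 - w i) • f i := by
  have hws : ∀ i ∉ s, w i • f i = 0 := fun i hi => by rw [hw i hi, zero_smul]
  rw [← tsum_eq_sum (L := .unconditional ι) hws, ← hf.tsum_sub (summable_of_ne_finset_zero hws)]
  simp only [sub_smul, one_smul]

noncomputable def bartlettWindow (M : ℕ) (k : ℤ) : ℝ := if k.natAbs < M then 1 - k.natAbs / M else 0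

section bartlettWindow

variable {M : ℕ} {k : ℤ}

lemma Int.natAbs_lt_iff_mem_Icc : k.natAbs < M ↔ k ∈ Icc (-(M : ℤ) + 1) (M - 1) := by
  rw [mem_Icc]; omega

lemma bartlettWindow_of_mem_Icc (hk : k ∈ Icc (-(M : ℤ) + 1) (M - 1)) :
    bartlettWindow M k = 1 - k.natAbs / M :=
  if_pos (Int.natAbs_lt_iff_mem_Icc.2 hk)

lemma bartlettWindow_of_notMem_Icc (hk : k ∉ Icc (-(M : ℤ) + 1) (M - 1)) :
    bartlettWindow M k = 0 :=
  if_neg (mt Int.natAbs_lt_iff_mem_Icc.1 hk)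

lemma bartlettWindow_le_one : bartlettWindow M k ≤ 1 := by
  unfold bartlettWindow
  split_ifs
  · linarith [show (0 : ℝ) ≤ k.natAbs / M by positivity]
  · exact zero_le_one

lemma one_sub_bartlettWindow_le (hM : 0 < M) (L : ℕ) :
    1 - bartlettWindow M k ≤ L / M + if L ≤ k.natAbs then 1 else 0 := by
  have hM' : (0 : ℝ) < M := by exact_mod_cast hM
  unfold bartlettWindow
  split_ifs with hkM hLk hLk
  · linarith [show (k.natAbs : ℝ) / M < 1 by rw [div_lt_one hM']; exact_mod_cast hkM,
      show (0 : ℝ) ≤ L / M by positivity]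
  · rw [sub_sub_cancel, add_zero]
    gcongr
    exact_mod_cast (not_le.1 hLk).le
  · linarith [show (0 : ℝ) ≤ L / M by positivity]
  · rw [sub_zero, add_zero, le_div_iff₀ hM', one_mul]
    exact_mod_cast (not_lt.1 hkM).trans (not_le.1 hLk).le

end bartlettWindow

lemma norm_tsum_one_sub_bartlettWindow_smul_le {𝕜 E : Type*} [RCLike 𝕜] [SeminormedAddCommGroup E]
    [NormedSpace 𝕜 E] {f : ℤ → E} {a : ℤ → ℝ} (hfa : ∀ k, ‖f k‖ ≤ a k) (ha : Summable a)
    {M : ℕ} (hM : 0 < M) (L : ℕ) :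
    ‖∑' k, (1 - (bartlettWindow M k : 𝕜)) • f k‖ ≤
      L / M * ∑' k, a k + ∑' k : {k : ℤ // L ≤ k.natAbs}, a k := by
  have hS : HasSum ({k | L ≤ k.natAbs}.indicator a) (∑' k : {k : ℤ // L ≤ k.natAbs}, a k) :=
    tsum_subtype {k : ℤ | L ≤ k.natAbs} a ▸ (ha.indicator _).hasSum
  refine tsum_of_norm_bounded ((ha.hasSum.mul_left ((L : ℝ) / M)).add hS) fun k => ?_
  rw [norm_smul, ← RCLike.ofReal_one, ← RCLike.ofReal_sub, RCLike.norm_ofReal,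
    abs_of_nonneg (sub_nonneg.2 bartlettWindow_le_one)]
  calc (1 - bartlettWindow M k) * ‖f k‖
      ≤ (L / M + if L ≤ k.natAbs then 1 else 0) * a k :=
        mul_le_mul (one_sub_bartlettWindow_le hM L) (hfa k) (norm_nonneg _) (by positivity)
    _ = L / M * a k + {k : ℤ | L ≤ k.natAbs}.indicator a k := by
        rw [add_mul, Set.indicator_apply, ite_mul, one_mul, zero_mul]; rfl

lemma norm_cexp_neg_two_pi_mul_I (s : ℝ) (k : ℤ) :
    ‖Complex.exp (-(2 * (Real.pi : ℂ) * (s : ℂ) * (k : ℂ)) * Complex.I)‖ = 1 := by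
  rw [Complex.norm_exp]; simp

theorem bias_bartlett_general {n : ℕ}
    (R : ℤ → Matrix (Fin n) (Fin n) ℝ)
    (hsum : Summable fun k : ℤ => spec2 (R k))
    (M : ℕ) (hM : 1 ≤ M) (ε : ℝ) (hε : 0 < ε) (Mhat : ℕ)
    (hMhat : ∑' k : {k : ℤ // Mhat ≤ k.natAbs}, spec2 (R k.val) ≤ ε / 2)
    (hMlarge : (M : ℝ) ≥ 2 * Mhat * (∑' k : ℤ, spec2 (R k)) / ε) :
    ∀ s ∈ Set.Icc (-(1:ℝ)/2) (1/2),
      spec2 (Phi R s -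
        ∑ k ∈ Finset.Icc (-(M : ℤ) + 1) ((M : ℤ) - 1),
          (((1 - (k.natAbs : ℝ) / M : ℝ) : ℂ) *
              Complex.exp (-(2 * (Real.pi : ℂ) * (s : ℂ) * (k : ℂ)) * Complex.I)) •
            (R k).map (↑· : ℝ → ℂ)) ≤ ε := by
  intro s _
  set f : ℤ → Matrix (Fin n) (Fin n) ℂ := fun k =>
    Complex.exp (-(2 * (Real.pi : ℂ) * (s : ℂ) * (k : ℂ)) * Complex.I) • (R k).map (↑· : ℝ → ℂ)
  have hf : ∀ k, ‖f k‖ ≤ spec2 (R k) := fun k => by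
    rw [norm_smul, norm_cexp_neg_two_pi_mul_I, one_mul]
    exact l2_opNorm_map_ofReal_le (R k)
  have hwindow : ∑ k ∈ Icc (-(M : ℤ) + 1) (M - 1),
      (((1 - (k.natAbs : ℝ) / M : ℝ) : ℂ) *
        Complex.exp (-(2 * (Real.pi : ℂ) * (s : ℂ) * (k : ℂ)) * Complex.I)) •
          (R k).map (↑· : ℝ → ℂ) =
        ∑ k ∈ Icc (-(M : ℤ) + 1) (M - 1), (bartlettWindow M k : ℂ) • f k :=
    sum_congr rfl fun k hk => by rw [bartlettWindow_of_mem_Icc hk, mul_smul]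
  have hbias : (Mhat : ℝ) / M * ∑' k, spec2 (R k) ≤ ε / 2 := by
    rw [ge_iff_le, div_le_iff₀ hε] at hMlarge
    rw [div_mul_eq_mul_div, div_le_iff₀ (by exact_mod_cast hM)]
    linarith
  rw [spec2_eq_norm, hwindow, Phi, tsum_sub_sum_smul_eq_tsum_one_sub_smul (hsum.of_norm_bounded hf)
    _ fun k hk => by rw [bartlettWindow_of_notMem_Icc hk, Complex.ofReal_zero]]
  calc _ ≤ Mhat / M * ∑' k, spec2 (R k) + ∑' k : {k : ℤ // Mhat ≤ k.natAbs}, spec2 (R k.val) :=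
        norm_tsum_one_sub_bartlettWindow_smul_le hf hsum hM Mhat
    _ ≤ ε / 2 + ε / 2 := add_le_add hbias hMhat
    _ = ε := add_halves ε

theorem bias_bartlett {n : ℕ} (hn : 1 ≤ n)
    (R : ℤ → Matrix (Fin n) (Fin n) ℝ)
    (hsum : Summable fun k : ℤ => spec2 (R k))
    (hRpos : 0 < ∑' k : ℤ, spec2 (R k))
    (M : ℕ) (hM : 1 ≤ M) (ε : ℝ) (hε : 0 < ε) (Mhat : ℕ)
    (hMhat : ∑' k : {k : ℤ // Mhat ≤ k.natAbs}, spec2 (R k.val) ≤ ε / 2)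
    (hMlarge : (M : ℝ) ≥ 2 * Mhat * (∑' k : ℤ, spec2 (R k)) / ε) :
    ∀ s ∈ Set.Icc (-(1:ℝ)/2) (1/2),
      spec2 (Phi R s -
        ∑ k ∈ Finset.Icc (-(M : ℤ) + 1) ((M : ℤ) - 1),
          (((1 - (k.natAbs : ℝ) / M : ℝ) : ℂ) *
              Complex.exp (-(2 * (Real.pi : ℂ) * (s : ℂ) * (k : ℂ)) * Complex.I)) •
            (R k).map (↑· : ℝ → ℂ)) ≤ ε :=
  bias_bartlett_general R hsum M hM ε hε Mhat hMhat hMlarge
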